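/- If α and β are two distinct quaternions in the same conjugacy class (β ∈ [α], β ≠ α), then a polynomial f ∈ ℍ[z] is divisible on the left by both z − α and z − β (i.e., f = (z−α)q₁ = (z−β)q₂) if and only if f is divisible by the real characteristic polynomial 𝒳_{[α]}(z) = z² − 2 Re(α) z + |α|². -/

import Mathlib

/-!
Conjugate quaternions share their real part and norm, so `𝒳 = (z - α)(z - ᾱ) = (z - β)(z - β̄)`.
Dividing `f` by the monic `𝒳` leaves a remainder of degree `< 2` that is still left divisible by
`z - α` and by `z - β`. Such a remainder is `(z - α) c = (z - β) c` for its leading coefficient `c`,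
so `(α - β) c = 0` and the remainder vanishes.
-/

open Polynomial

namespace Polynomial

variable {R : Type*} [Ring R] [NoZeroDivisors R]

theorem eq_X_sub_C_mul_C_coeff_one_of_dvd {a : R} {r : R[X]} (hr : r.degree < 2)
    (hdvd : X - C a ∣ r) : r = (X - C a) * C (r.coeff 1) := by
  nontriviality R
  obtain ⟨s, rfl⟩ := hdvd
  have hs : s.degree ≤ 0 := by
    rw [degree_mul, degree_X_sub_C] at hr
    rw [← Nat.WithBot.lt_one_iff_le_zero]
    exact (WithBot.add_lt_add_iff_left WithBot.one_ne_bot).mp hr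
  rw [eq_C_of_degree_le_zero hs]
  simp [coeff_mul_C, coeff_X]

theorem eq_zero_of_X_sub_C_dvd_of_X_sub_C_dvd {a b : R} (hab : a ≠ b) {r : R[X]}
    (hr : r.degree < 2) (ha : X - C a ∣ r) (hb : X - C b ∣ r) : r = 0 := by
  have hra := eq_X_sub_C_mul_C_coeff_one_of_dvd hr ha
  have hrb := eq_X_sub_C_mul_C_coeff_one_of_dvd hr hb
  have hcoeff : a * r.coeff 1 = b * r.coeff 1 := by
    simpa [coeff_mul_C] using congrArg (coeff · 0) (hra.symm.trans hrb)
  have hc : r.coeff 1 = 0 :=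
    (mul_eq_zero.mp (sub_mul a b _ ▸ sub_eq_zero.mpr hcoeff)).resolve_left (sub_ne_zero.mpr hab)
  rw [hra, hc, C_0, mul_zero]

theorem X_sub_C_dvd_and_X_sub_C_dvd_iff {a a' b b' : R} (hab : a ≠ b)
    (h : (X - C a) * (X - C a') = (X - C b) * (X - C b')) (f : R[X]) :
    (X - C a ∣ f ∧ X - C b ∣ f) ↔ (X - C a) * (X - C a') ∣ f := by
  have : Nontrivial R := nontrivial_of_ne a b hab
  set χ := (X - C a) * (X - C a')
  have hχ : χ.Monic := (monic_X_sub_C a).mul (monic_X_sub_C a')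
  refine ⟨fun ⟨ha, hb⟩ => ?_, fun hχf =>
    ⟨(dvd_mul_right _ _).trans hχf, (h ▸ dvd_mul_right _ _).trans hχf⟩⟩
  have hr : f %ₘ χ = f - χ * (f /ₘ χ) := eq_sub_of_add_eq (modByMonic_add_div f χ)
  have hdeg : (f %ₘ χ).degree < 2 := by
    have hχdeg : χ.degree = 2 := by rw [degree_mul, degree_X_sub_C, degree_X_sub_C]; rfl
    exact hχdeg ▸ degree_modByMonic_lt f hχ
  rw [← modByMonic_eq_zero_iff_dvd hχ]
  refine eq_zero_of_X_sub_C_dvd_of_X_sub_C_dvd hab hdeg ?_ ?_ <;> rw [hr]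
  · exact dvd_sub ha ((dvd_mul_right _ _).mul_right _)
  · exact dvd_sub hb ((h ▸ dvd_mul_right _ _).mul_right _)

end Polynomial

namespace Quaternion

theorem re_mul_comm {R : Type*} [CommRing R] (a b : ℍ[R]) : (a * b).re = (b * a).re := by
  simp only [re_mul]; ring

theorem re_inv_mul_mul_self (a : ℍ[ℝ]) {h : ℍ[ℝ]} (hh : h ≠ 0) :
    (h⁻¹ * a * h).re = a.re := by
  rw [re_mul_comm, ← mul_assoc, mul_inv_cancel₀ hh, one_mul]

/-- The characteristic polynomial `𝒳_{[α]}` of the conjugacy class of `α`. -/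
noncomputable def realCharPoly (α : ℍ[ℝ]) : ℍ[ℝ][X] :=
  X ^ 2 - C ((2 * α.re : ℝ) : ℍ[ℝ]) * X + C ((‖α‖ ^ 2 : ℝ) : ℍ[ℝ])

theorem realCharPoly_eq_mul_star (α : ℍ[ℝ]) :
    realCharPoly α = (X - C α) * (X - C (star α)) := by
  have hre : ((2 * α.re : ℝ) : ℍ[ℝ]) = α + star α := (self_add_star' α).symm
  have hnorm : ((‖α‖ ^ 2 : ℝ) : ℍ[ℝ]) = α * star α := by
    rw [self_mul_star, sq, normSq_eq_norm_mul_self]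
  rw [realCharPoly, hre, hnorm, C_add, C_mul, sub_mul, mul_sub, mul_sub,
    X_mul (p := C (star α)), sq]
  noncomm_ring

theorem realCharPoly_inv_mul_mul_self (α : ℍ[ℝ]) {h : ℍ[ℝ]} (hh : h ≠ 0) :
    realCharPoly (h⁻¹ * α * h) = realCharPoly α := by
  have hnorm : ‖h⁻¹ * α * h‖ = ‖α‖ := by
    rw [norm_mul, norm_mul, norm_inv]
    field_simp [norm_ne_zero_iff.mpr hh]
  rw [realCharPoly, realCharPoly, re_inv_mul_mul_self α hh, hnorm]

end Quaternion

/-- Two distinct conjugate left linear divisors combine into the characteristic polynomial. -/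
theorem stmt3 (α β : Quaternion ℝ) (hβ : ∃ h : Quaternion ℝ, h ≠ 0 ∧ β = h⁻¹ * α * h)
    (hne : β ≠ α) (f : Polynomial (Quaternion ℝ)) :
    ((∃ q₁, f = (X - C α) * q₁) ∧ (∃ q₂, f = (X - C β) * q₂)) ↔
      ∃ q, f = (X ^ 2 - C ((2 * α.re : ℝ) : Quaternion ℝ) * X
        + C ((‖α‖ ^ 2 : ℝ) : Quaternion ℝ)) * q := by
  obtain ⟨h, hh, rfl⟩ := hβ
  have hfactor : (X - C α) * (X - C (star α))
      = (X - C (h⁻¹ * α * h)) * (X - C (star (h⁻¹ * α * h))) := by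
    rw [← Quaternion.realCharPoly_eq_mul_star, ← Quaternion.realCharPoly_eq_mul_star,
      Quaternion.realCharPoly_inv_mul_mul_self α hh]
  -- In a noncommutative monoid `p ∣ f` means `∃ q, f = p * q`: divisibility on the left.
  change (X - C α ∣ f ∧ X - C (h⁻¹ * α * h) ∣ f) ↔ Quaternion.realCharPoly α ∣ f
  rw [Quaternion.realCharPoly_eq_mul_star]
  exact X_sub_C_dvd_and_X_sub_C_dvd_iff hne.symm hfactor f
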